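/- Let M be a complete Riemannian manifold with sectional curvature ≤ 𝒦 > 0, μ ∈ M, γ a geodesic through μ, and let ε, t satisfy t√𝒦·cot(t√𝒦) = −(1−ε)/(2ε) with 0 < t < π/√𝒦. Define F^{t,ε}(p) = (ε/2)d²(p,γ(t)) + (ε/2)d²(p,γ(−t)) + (1−ε)d²(p,μ). If the comparison measure ζ on S²_𝒦 (with the same weights at comparison points) has unique Fréchet mean μ̃ with F_ζ(μ̃) = F^{t,ε}(μ), and if the Toponogov comparison inequalities hold, then μ is the unique minimizer of F^{t,ε} restricted to the open ball B(μ, π/√𝒦). -/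

import Mathlib

/-! The Toponogov comparison point `p̃` of a point `p ≠ μ` is a point of the sphere other than
`μ̃` (it lies at distance `d(p, μ) > 0` from `μ̃`), and `F_ζ(p̃) ≤ F(p)`: the `μ`-term is unchanged
and the `γ(±t)`-terms only shrink. Hence `F(μ) = F_ζ(μ̃) < F_ζ(p̃) ≤ F(p)`. -/

open Real

noncomputable section

/-- Geodesic distance on the sphere of curvature `K > 0` (radius `1/√K`),
realized as `{x : ℝ³ | ‖x‖ = 1/√K}`. -/
def sphereDist (K : ℝ) (x y : EuclideanSpace ℝ (Fin 3)) : ℝ :=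
  (1 / Real.sqrt K) * Real.arccos (K * inner ℝ x y)

/-- The unit-speed geodesic through `μ` in direction `V` on the sphere of
curvature `K`. -/
def sphereGeodesic (K : ℝ) (μ V : EuclideanSpace ℝ (Fin 3)) (t : ℝ) :
    EuclideanSpace ℝ (Fin 3) :=
  Real.cos (t * Real.sqrt K) • μ + (Real.sin (t * Real.sqrt K) / Real.sqrt K) • V

lemma sphereDist_nonneg (K : ℝ) (x y : EuclideanSpace ℝ (Fin 3)) : 0 ≤ sphereDist K x y :=
  mul_nonneg (by positivity) (arccos_nonneg _)

lemma sphereDist_self {K : ℝ} (hK : 0 < K) {x : EuclideanSpace ℝ (Fin 3)}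
    (hx : ‖x‖ = 1 / √K) : sphereDist K x x = 0 := by
  have hKx : K * ‖x‖ ^ 2 = 1 := by
    rw [hx, div_pow, one_pow, sq_sqrt hK.le, mul_one_div_cancel hK.ne']
  rw [sphereDist, real_inner_self_eq_norm_sq, hKx, arccos_one, mul_zero]

theorem mean_uniqueness_transfers_from_sphere_general
    {M : Type*} [MetricSpace M]
    (K : ℝ) (hK : 0 < K)
    (μ : M) (γ : ℝ → M)
    (ε t : ℝ) (hε0 : 0 < ε)
    (F : M → ℝ)
    (hF : ∀ p, F p = (ε / 2) * dist p (γ t) ^ 2 + (ε / 2) * dist p (γ (-t)) ^ 2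
        + (1 - ε) * dist p μ ^ 2)
    -- comparison configuration on the sphere of curvature `K`
    (μs V : EuclideanSpace ℝ (Fin 3))
    (hμs : ‖μs‖ = 1 / Real.sqrt K)
    (Fζ : EuclideanSpace ℝ (Fin 3) → ℝ)
    (hFζ : ∀ q, Fζ q =
      (ε / 2) * sphereDist K q (sphereGeodesic K μs V t) ^ 2
        + (ε / 2) * sphereDist K q (sphereGeodesic K μs V (-t)) ^ 2
        + (1 - ε) * sphereDist K q μs ^ 2)
    (hunique : ∀ q : EuclideanSpace ℝ (Fin 3),
      ‖q‖ = 1 / Real.sqrt K → q ≠ μs → Fζ μs < Fζ q)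
    (hvalue : Fζ μs = F μ)
    -- Toponogov comparison inequalities
    (htop : ∀ p : M, dist p μ < π / Real.sqrt K →
      ∃ ps : EuclideanSpace ℝ (Fin 3), ‖ps‖ = 1 / Real.sqrt K ∧
        sphereDist K ps μs = dist p μ ∧
        sphereDist K ps (sphereGeodesic K μs V t) ≤ dist p (γ t) ∧
        sphereDist K ps (sphereGeodesic K μs V (-t)) ≤ dist p (γ (-t))) :
    ∀ p : M, dist p μ < π / Real.sqrt K → p ≠ μ → F μ < F p := by
  intro p hp hpμ
  obtain ⟨ps, hps, hdμ, hdPos, hdNeg⟩ := htop p hp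
  have hps_ne : ps ≠ μs := by
    rintro rfl
    exact hpμ (dist_eq_zero.mp (hdμ ▸ sphereDist_self hK hps))
  have hle : Fζ ps ≤ F p := by
    rw [hFζ, hF, hdμ]
    gcongr <;> apply sphereDist_nonneg
  calc F μ = Fζ μs := hvalue.symm
    _ < Fζ ps := hunique ps hps hps_ne
    _ ≤ F p := hle

/-- on a complete manifold `M` with `sec ≤ K`, let
`F^{t,ε}(p) = (ε/2)d²(p,γ(t)) + (ε/2)d²(p,γ(−t)) + (1−ε)d²(p,μ)` with
`t√K·cot(t√K) = −(1−ε)/(2ε)`, `0 < t < π/√K`. If the comparison measure `ζ` on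
`S²_K` has unique Fréchet mean `μ̃` with `F_ζ(μ̃) = F^{t,ε}(μ)`, and every
`p ∈ B(μ, π/√K)` admits a Toponogov comparison point `p̃` on `S²_K` with
`d_s(p̃,μ̃) = d(p,μ)`, `d_s(p̃,γ̃(±t)) ≤ d(p,γ(±t))`, then `μ` is the unique
minimizer of `F^{t,ε}` on the open ball `B(μ, π/√K)`. -/
theorem mean_uniqueness_transfers_from_sphere
    {M : Type*} [MetricSpace M] [CompleteSpace M]
    (K : ℝ) (hK : 0 < K)
    (μ : M) (γ : ℝ → M) (hγ0 : γ 0 = μ)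
    (ε t : ℝ) (hε0 : 0 < ε) (hε1 : ε < 1)
    (ht0 : 0 < t) (ht : t < π / Real.sqrt K)
    (hcot : t * Real.sqrt K * Real.cot (t * Real.sqrt K) = -(1 - ε) / (2 * ε))
    (F : M → ℝ)
    (hF : ∀ p, F p = (ε / 2) * dist p (γ t) ^ 2 + (ε / 2) * dist p (γ (-t)) ^ 2
        + (1 - ε) * dist p μ ^ 2)
    -- comparison configuration on the sphere of curvature `K`
    (μs V : EuclideanSpace ℝ (Fin 3))
    (hμs : ‖μs‖ = 1 / Real.sqrt K) (hV : ‖V‖ = 1) (hμV : inner ℝ μs V = (0 : ℝ))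
    (Fζ : EuclideanSpace ℝ (Fin 3) → ℝ)
    (hFζ : ∀ q, Fζ q =
      (ε / 2) * sphereDist K q (sphereGeodesic K μs V t) ^ 2
        + (ε / 2) * sphereDist K q (sphereGeodesic K μs V (-t)) ^ 2
        + (1 - ε) * sphereDist K q μs ^ 2)
    (hunique : ∀ q : EuclideanSpace ℝ (Fin 3),
      ‖q‖ = 1 / Real.sqrt K → q ≠ μs → Fζ μs < Fζ q)
    (hvalue : Fζ μs = F μ)
    -- Toponogov comparison inequalities
    (htop : ∀ p : M, dist p μ < π / Real.sqrt K →
      ∃ ps : EuclideanSpace ℝ (Fin 3), ‖ps‖ = 1 / Real.sqrt K ∧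
        sphereDist K ps μs = dist p μ ∧
        sphereDist K ps (sphereGeodesic K μs V t) ≤ dist p (γ t) ∧
        sphereDist K ps (sphereGeodesic K μs V (-t)) ≤ dist p (γ (-t))) :
    ∀ p : M, dist p μ < π / Real.sqrt K → p ≠ μ → F μ < F p :=
  mean_uniqueness_transfers_from_sphere_general K hK μ γ ε t hε0 F hF μs V hμs Fζ hFζ hunique hvalue
    htop

end
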